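/- arXiv:1210.1539 — 2 statements merged into one kernel-verified Lean document; each statement's English description precedes it below -/
import Mathlib

section
/- If a *-graph contains a Vassiliev obstruct, then it admits no *-embedding into the plane. -/
/-!
We model a finite multigraph combinatorially by its half-edges ("darts"):
`edgeInv` is a fixed-point-free involution pairing the two darts of each edge,
and the vertices are the cycles of the permutation `rot`; the cycle of `rot`
through a dart is a chosen orientation of the unoriented cyclic order
(the *-structure) at that vertex.  All notions defined below are invariant
under reversing the chosen orientation at a vertex, so such a structure
faithfully represents a *-graph.  An embedding of the graph into the sphere
(equivalently, the plane) is modelled, as usual in topological graph theory,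
by a rotation system whose Euler characteristic is `2` on every connected
component; it is a *-embedding when the rotation at each vertex agrees with
the *-structure or with its reversal.
-/

/-- A *-graph, encoded by half-edges (darts). -/
structure StarGraph where
  /-- the type of darts (half-edges) -/
  D : Type
  [fintypeD : Fintype D]
  [decEqD : DecidableEq D]
  /-- the fixed-point-free involution matching the two darts of each edge -/
  edgeInv : Equiv.Perm D
  /-- a permutation whose cycles are the vertices; its cycle through a dart is a
  chosen orientation of the unoriented cyclic order (*-structure) at that vertex -/
  rot : Equiv.Perm D
  edgeInv_invol : ∀ d, edgeInv (edgeInv d) = d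
  edgeInv_ne : ∀ d, edgeInv d ≠ d

attribute [instance] StarGraph.fintypeD StarGraph.decEqD

namespace StarGraph

variable (G : StarGraph)

/-- Two darts emanate from the same vertex iff they lie on the same cycle of `rot`. -/
def SameVertex (d e : G.D) : Prop := G.rot.SameCycle d e

/-- The degree of the vertex from which the dart `d` emanates. -/
noncomputable def degree (d : G.D) : ℕ := Nat.card {e : G.D // G.SameVertex d e}

/-- The number of cycles (orbits, including fixed points) of a permutation. -/
noncomputable def cycleCount {α : Type*} (f : Equiv.Perm α) : ℕ :=
  Nat.card (Quotient (Equiv.Perm.SameCycle.setoid f))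

/-- The number of vertices. -/
noncomputable def numVertices : ℕ := cycleCount G.rot

/-- The number of edges. -/
noncomputable def numEdges : ℕ := Fintype.card G.D / 2

/-- The number of connected components. -/
noncomputable def numComponents : ℕ :=
  Nat.card (Quotient (Relation.EqvGen.setoid (fun d e : G.D => e = G.rot d ∨ e = G.edgeInv d)))

/-- The number of faces of the embedding determined by the rotation system `ρ`:
the number of cycles of the face permutation `ρ * edgeInv`. -/
noncomputable def numFaces (ρ : Equiv.Perm G.D) : ℕ := cycleCount (ρ * G.edgeInv)

/-- `ρ` is a rotation system compatible with the *-structure:  at each vertex it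
agrees with the chosen orientation of the cyclic order or with its reversal. -/
def IsCompatibleRotation (ρ : Equiv.Perm G.D) : Prop :=
  ∀ d : G.D, (∀ e, G.SameVertex d e → ρ e = G.rot e) ∨
             (∀ e, G.SameVertex d e → ρ e = G.rot⁻¹ e)

/-- `ρ` is a rotation system describing a *-embedding of `G` into the sphere
(equivalently, the plane): it is compatible with the *-structure and has Euler
characteristic `2` on each connected component. -/
def IsPlanarStarEmbedding (ρ : Equiv.Perm G.D) : Prop :=
  G.IsCompatibleRotation ρ ∧
    (G.numVertices : ℤ) - G.numEdges + G.numFaces ρ = 2 * G.numComponents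

/-- `G` admits a *-embedding into the plane. -/
def StarPlanar : Prop := ∃ ρ : Equiv.Perm G.D, G.IsPlanarStarEmbedding ρ

end StarGraph

/-- A cycle in the sense of Vassiliev's planarity criterion: a closed walk,
recorded by the cyclically ordered sequence of darts it traverses, that repeats
no edge (repeated vertices are allowed). -/
structure ClosedTrail (G : StarGraph) where
  /-- the number of edges of the cycle -/
  len : ℕ
  len_pos : 0 < len
  /-- the dart along which the walk leaves its `i`-th vertex -/
  dart : ZMod len → G.D
  /-- the walk is closed: the head of each traversed edge is the tail of the next -/
  next_sameVertex : ∀ i, G.SameVertex (G.edgeInv (dart i)) (dart (i + 1))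
  /-- no edge is repeated -/
  edges_injective : ∀ i j, (dart i = dart j ∨ dart i = G.edgeInv (dart j)) → i = j

/-- Two closed trails have no common edge. -/
def ClosedTrail.EdgeDisjoint {G : StarGraph} (A B : ClosedTrail G) : Prop :=
  ∀ i j, A.dart i ≠ B.dart j ∧ A.dart i ≠ G.edgeInv (B.dart j)

/-- The least positive number of steps needed to get from `x` to `y` along the
permutation `σ` (junk value `0` if `y` is not on the cycle of `x`). -/
noncomputable def stepsTo {α : Type*} (σ : Equiv.Perm α) (x y : α) : ℕ :=
  sInf {m : ℕ | 0 < m ∧ (σ ^ m) x = y}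

/-- The four darts `a₁, a₂, b₁, b₂`, lying on one cycle of `σ`, appear in this
cycle in alternating order: starting at `a₁`, one of `b₁, b₂` is met strictly
before `a₂` and the other strictly after.  This is invariant under replacing
`σ` by `σ⁻¹`, i.e. it only depends on the unoriented cyclic order. -/
def Alternating {α : Type*} (σ : Equiv.Perm α) (a₁ a₂ b₁ b₂ : α) : Prop :=
  (stepsTo σ a₁ b₁ < stepsTo σ a₁ a₂ ∧ stepsTo σ a₁ a₂ < stepsTo σ a₁ b₂) ∨
  (stepsTo σ a₁ b₂ < stepsTo σ a₁ a₂ ∧ stepsTo σ a₁ a₂ < stepsTo σ a₁ b₁)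

/-- The pair of passes `(i, j)` is a crossing of the closed trails `A` and `B`:
at its `i`-th step `A` passes through a vertex `v` along the half-edges
`A₁ = edgeInv (A.dart (i-1))` (incoming) and `A₂ = A.dart i` (outgoing), `B`
passes through the same vertex `v` at its `j`-th step along `B₁, B₂`, and
`A₁, B₁, A₂, B₂` alternate in the cyclic order at `v`.  Counting crossings
means counting such pairs `(i, j)`, i.e. crossings are counted with
multiplicity. -/
def ClosedTrail.IsCrossing {G : StarGraph} (A B : ClosedTrail G)
    (p : ZMod A.len × ZMod B.len) : Prop :=
  G.SameVertex (A.dart p.1) (B.dart p.2) ∧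
  Alternating G.rot (G.edgeInv (A.dart (p.1 - 1))) (A.dart p.1)
    (G.edgeInv (B.dart (p.2 - 1))) (B.dart p.2)

/-- A Vassiliev obstruct: a pair of edge-disjoint cycles having exactly one
crossing (with multiplicity). -/
def HasVassilievObstruct (G : StarGraph) : Prop :=
  ∃ A B : ClosedTrail G, A.EdgeDisjoint B ∧
    Nat.card {p : ZMod A.len × ZMod B.len // A.IsCrossing B p} = 1


/-!
Let the rotation system `ρ` be a *-embedding into the plane, and work over `𝔽₂` with functions
on darts. The edge sets with an even number of darts at each vertex form the cycle space. The
boundaries of sets of faces (the cycles of `ρ * edgeInv`) lie in it, and Euler's formula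
`V - E + F = 2C` gives both spaces the dimension `E - V + C = F - C`. So the edge set of `A` is
the boundary of a set `g` of faces. Now let `B` pass through a vertex, coming in along `b₁` and
leaving along `b₂`. The number of crossings with `A` there is, mod 2, the number of darts of `A`
strictly between `b₁` and `b₂` in the rotation. Walking around the vertex from `b₁` to `b₂`,
that is how often we cross the boundary of `g`, so it is the change of `g` from the face at the
edge before the pass to the face at the edge after it. Along the closed trail `B` these changes
add up to zero, so `A` and `B` cross an even number of times.
-/

section StepsTo

variable {α : Type*} {σ : Equiv.Perm α} {x y z : α} {m : ℕ}

theorem stepsTo_le (hm : 0 < m) (h : (σ ^ m) x = y) : stepsTo σ x y ≤ m :=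
  Nat.sInf_le ⟨hm, h⟩

theorem stepsTo_inv_self (x : α) : stepsTo σ⁻¹ x x = stepsTo σ x x := by
  simp only [stepsTo, inv_pow, Equiv.Perm.inv_eq_iff_eq, eq_comm (a := x)]

theorem pow_sub_apply_pow {j k : ℕ} (h : j ≤ k) : (σ ^ (k - j)) ((σ ^ j) x) = (σ ^ k) x := by
  rw [← Equiv.Perm.mul_apply, ← pow_add, Nat.sub_add_cancel h]

namespace Equiv.Perm.SameCycle

variable [Finite α]

theorem stepsTo_pos_and_pow_eq (h : σ.SameCycle x y) :
    0 < stepsTo σ x y ∧ (σ ^ stepsTo σ x y) x = y := by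
  obtain ⟨i, hi, -, hxy⟩ := h.exists_pow_eq''
  exact Nat.sInf_mem (⟨i, hi, hxy⟩ : {m | 0 < m ∧ (σ ^ m) x = y}.Nonempty)

theorem stepsTo_pos (h : σ.SameCycle x y) : 0 < stepsTo σ x y :=
  h.stepsTo_pos_and_pow_eq.1

theorem pow_stepsTo (h : σ.SameCycle x y) : (σ ^ stepsTo σ x y) x = y :=
  h.stepsTo_pos_and_pow_eq.2

end Equiv.Perm.SameCycle

variable [Finite α]

open Equiv.Perm

theorem stepsTo_self_pos (x : α) : 0 < stepsTo σ x x := (SameCycle.refl σ x).stepsTo_pos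

theorem pow_stepsTo_self (x : α) : (σ ^ stepsTo σ x x) x = x := (SameCycle.refl σ x).pow_stepsTo

theorem stepsTo_eq (hm : 0 < m) (hmx : m ≤ stepsTo σ x x) (h : (σ ^ m) x = y) :
    stepsTo σ x y = m := by
  have hxy : σ.SameCycle x y := ⟨m, by simpa using h⟩
  refine (stepsTo_le hm h).antisymm (not_lt.1 fun hlt => ?_)
  have hret : (σ ^ (m - stepsTo σ x y)) x = x := by
    apply (σ ^ stepsTo σ x y).injective
    rw [← mul_apply, ← pow_add, Nat.add_sub_cancel' hlt.le, h, hxy.pow_stepsTo]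
  have := stepsTo_le (by omega) hret
  have := hxy.stepsTo_pos
  omega

namespace Equiv.Perm.SameCycle

theorem stepsTo_le_self (h : σ.SameCycle x y) : stepsTo σ x y ≤ stepsTo σ x x := by
  by_contra! hlt
  have hy : (σ ^ (stepsTo σ x y - stepsTo σ x x)) x = y := by
    conv_rhs => rw [← h.pow_stepsTo, ← Nat.sub_add_cancel hlt.le]
    rw [pow_add, mul_apply, pow_stepsTo_self]
  have := stepsTo_le (by omega) hy
  have := stepsTo_self_pos (σ := σ) x
  omega

theorem stepsTo_lt_self (h : σ.SameCycle x y) (hne : y ≠ x) :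
    stepsTo σ x y < stepsTo σ x x :=
  h.stepsTo_le_self.lt_of_ne fun he => hne (by rw [← h.pow_stepsTo, he, pow_stepsTo_self])

theorem stepsTo_inj (hy : σ.SameCycle x y) (hz : σ.SameCycle x z) :
    stepsTo σ x y = stepsTo σ x z ↔ y = z :=
  ⟨fun he => by rw [← hy.pow_stepsTo, ← hz.pow_stepsTo, he], fun he => by rw [he]⟩

theorem stepsTo_self_eq (h : σ.SameCycle x y) : stepsTo σ y y = stepsTo σ x x := by
  have key : ∀ {u v : α}, σ.SameCycle u v → stepsTo σ v v ≤ stepsTo σ u u := by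
    intro u v huv
    refine stepsTo_le (stepsTo_self_pos u) ?_
    rw [← huv.pow_stepsTo, ← mul_apply, ← pow_add, add_comm, pow_add, mul_apply,
      pow_stepsTo_self]
  exact (key h).antisymm (key h.symm)

theorem stepsTo_eq_ite (hy : σ.SameCycle x y) (hz : σ.SameCycle x z) :
    stepsTo σ y z = if stepsTo σ x y < stepsTo σ x z then stepsTo σ x z - stepsTo σ x y
      else stepsTo σ x z + stepsTo σ x x - stepsTo σ x y := by
  have := hy.stepsTo_pos
  have := hz.stepsTo_pos
  have := hy.stepsTo_le_self
  have := hz.stepsTo_le_self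
  have hper := hy.stepsTo_self_eq
  have hpow : ∀ k, stepsTo σ x y ≤ k → (σ ^ (k - stepsTo σ x y)) y = (σ ^ k) x := fun k hk => by
    calc (σ ^ (k - stepsTo σ x y)) y = (σ ^ (k - stepsTo σ x y)) ((σ ^ stepsTo σ x y) x) := by
          rw [hy.pow_stepsTo]
      _ = (σ ^ k) x := pow_sub_apply_pow hk
  split_ifs with hlt
  · exact stepsTo_eq (by omega) (by omega) (by rw [hpow _ hlt.le, hz.pow_stepsTo])
  · refine stepsTo_eq (by omega) (by omega) ?_
    rw [hpow _ (by omega), pow_add, mul_apply, pow_stepsTo_self, hz.pow_stepsTo]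

theorem stepsTo_inv (h : σ.SameCycle x y) (hne : y ≠ x) :
    stepsTo σ⁻¹ x y = stepsTo σ x x - stepsTo σ x y := by
  have := h.stepsTo_pos
  have := h.stepsTo_lt_self hne
  refine stepsTo_eq (by omega) (by rw [stepsTo_inv_self]; omega) ?_
  rw [inv_pow, inv_eq_iff_eq]
  calc x = (σ ^ (stepsTo σ x x - stepsTo σ x y)) ((σ ^ stepsTo σ x y) x) := by
        rw [pow_sub_apply_pow (by omega), pow_stepsTo_self]
    _ = _ := by rw [h.pow_stepsTo]

end Equiv.Perm.SameCycle

end StepsTo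

section SameCycle

variable {α : Type*} {σ τ : Equiv.Perm α} {d : α}

theorem Equiv.Perm.pow_apply_eq_of_forall_sameCycle (h : ∀ e, τ.SameCycle d e → σ e = τ e)
    (m : ℕ) : (σ ^ m) d = (τ ^ m) d := by
  induction m with
  | zero => rfl
  | succ m ih =>
    rw [pow_succ', pow_succ', Equiv.Perm.mul_apply, Equiv.Perm.mul_apply, ih,
      h _ ⟨m, by simp⟩]

theorem Equiv.Perm.sameCycle_iff_of_forall_sameCycle [Finite α]
    (h : ∀ e, τ.SameCycle d e → σ e = τ e) {e : α} : σ.SameCycle d e ↔ τ.SameCycle d e := by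
  have key (π : Equiv.Perm α) : π.SameCycle d e ↔ ∃ m : ℕ, (π ^ m) d = e :=
    ⟨SameCycle.exists_nat_pow_eq, fun ⟨m, hm⟩ => ⟨m, by simpa using hm⟩⟩
  simp only [key, pow_apply_eq_of_forall_sameCycle h]

theorem stepsTo_eq_of_forall_sameCycle (h : ∀ e, τ.SameCycle d e → σ e = τ e) (e : α) :
    stepsTo σ d e = stepsTo τ d e := by
  simp only [stepsTo, Equiv.Perm.pow_apply_eq_of_forall_sameCycle h]

end SameCycle

section Alternating

variable {α : Type*} [Finite α] {σ : Equiv.Perm α} {a₁ a₂ b₁ b₂ : α}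

open Equiv.Perm

theorem alternating_inv_iff (h₂ : σ.SameCycle a₁ a₂) (h₃ : σ.SameCycle a₁ b₁)
    (h₄ : σ.SameCycle a₁ b₂) (n₂ : a₂ ≠ a₁) (n₃ : b₁ ≠ a₁) (n₄ : b₂ ≠ a₁) :
    Alternating σ⁻¹ a₁ a₂ b₁ b₂ ↔ Alternating σ a₁ a₂ b₁ b₂ := by
  have := h₂.stepsTo_lt_self n₂
  have := h₃.stepsTo_lt_self n₃
  have := h₄.stepsTo_lt_self n₄
  unfold Alternating
  rw [h₂.stepsTo_inv n₂, h₃.stepsTo_inv n₃, h₄.stepsTo_inv n₄]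
  omega

theorem alternating_iff_xor (h₁ : σ.SameCycle b₁ a₁) (h₂ : σ.SameCycle b₁ a₂)
    (h₃ : σ.SameCycle b₁ b₂) (n₁₃ : a₁ ≠ b₁) (n₂₃ : a₂ ≠ b₁) (n₂₄ : a₂ ≠ b₂) (n₃₄ : b₁ ≠ b₂) :
    Alternating σ a₁ a₂ b₁ b₂ ↔
      Xor (stepsTo σ b₁ a₁ < stepsTo σ b₁ b₂) (stepsTo σ b₁ a₂ < stepsTo σ b₁ b₂) := by
  have := h₁.stepsTo_lt_self n₁₃
  have := h₂.stepsTo_lt_self n₂₃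
  have := h₃.stepsTo_lt_self n₃₄.symm
  have := h₁.stepsTo_pos
  have := h₂.stepsTo_pos
  have := h₃.stepsTo_pos
  have := (h₂.stepsTo_inj h₃).not.2 n₂₄
  unfold Alternating
  rw [h₁.stepsTo_eq_ite (SameCycle.refl σ b₁), h₁.stepsTo_eq_ite h₂, h₁.stepsTo_eq_ite h₃,
    xor_iff_not_iff]
  split_ifs <;> omega

end Alternating

section Arc

variable {α : Type*} [Fintype α] {σ : Equiv.Perm α} {b₁ b₂ x : α}

open Classical in
noncomputable def arc (σ : Equiv.Perm α) (b₁ b₂ : α) : Finset α :=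
  {x | σ.SameCycle b₁ x ∧ stepsTo σ b₁ x < stepsTo σ b₁ b₂}

theorem mem_arc : x ∈ arc σ b₁ b₂ ↔ σ.SameCycle b₁ x ∧ stepsTo σ b₁ x < stepsTo σ b₁ b₂ := by
  classical
  simp [arc]

theorem sum_arc_sub {M : Type*} [AddCommGroup M] (h : σ.SameCycle b₁ b₂) (hne : b₂ ≠ b₁)
    (f : α → M) : ∑ x ∈ arc σ b₁ b₂, (f (σ x) - f x) = f b₂ - f (σ b₁) := by
  have := h.stepsTo_lt_self hne
  calc ∑ x ∈ arc σ b₁ b₂, (f (σ x) - f x)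
      = ∑ k ∈ Finset.Ico 1 (stepsTo σ b₁ b₂), (f ((σ ^ (k + 1)) b₁) - f ((σ ^ k) b₁)) := by
        refine Finset.sum_nbij' (stepsTo σ b₁) (fun k => (σ ^ k) b₁) (fun x hx => ?_)
          (fun k hk => ?_) (fun x hx => (mem_arc.1 hx).1.pow_stepsTo) (fun k hk => ?_)
          (fun x hx => ?_)
        · obtain ⟨hx, hlt⟩ := mem_arc.1 hx
          exact Finset.mem_Ico.2 ⟨hx.stepsTo_pos, hlt⟩
        · obtain ⟨hk, hlt⟩ := Finset.mem_Ico.1 hk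
          rw [mem_arc, stepsTo_eq hk (by omega) rfl]
          exact ⟨⟨k, by simp⟩, hlt⟩
        · obtain ⟨hk, hlt⟩ := Finset.mem_Ico.1 hk
          exact stepsTo_eq hk (by omega) rfl
        · rw [pow_succ', Equiv.Perm.mul_apply, (mem_arc.1 hx).1.pow_stepsTo]
    _ = f b₂ - f (σ b₁) := by
        rw [Finset.sum_Ico_sub (fun k => f ((σ ^ k) b₁)) h.stepsTo_pos, h.pow_stepsTo, pow_one]

end Arc

section ClassFunctions

open Module

variable (K : Type*) [Field K] {α : Type*}

def Setoid.classFunctions (s : Setoid α) : Submodule K (α → K) where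
  carrier := {f | ∀ x y, s x y → f x = f y}
  add_mem' hf hg x y h := congrArg₂ (· + ·) (hf x y h) (hg x y h)
  zero_mem' _ _ _ := rfl
  smul_mem' c _ hf x y h := congrArg (c • ·) (hf x y h)

theorem Setoid.range_funLeft_mk (s : Setoid α) :
    LinearMap.range (LinearMap.funLeft K K (Quotient.mk s)) = s.classFunctions K := by
  ext f
  refine ⟨?_, fun hf => ⟨Quotient.lift f hf, rfl⟩⟩
  rintro ⟨g, rfl⟩ x y h
  exact congrArg g (Quotient.sound h)

theorem Setoid.finrank_classFunctions [Finite α] (s : Setoid α) :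
    finrank K (s.classFunctions K) = Nat.card (Quotient s) := by
  have := Fintype.ofFinite α
  classical
  rw [← s.range_funLeft_mk K, LinearMap.finrank_range_of_inj
    (LinearMap.funLeft_injective_of_surjective _ _ _ Quotient.mk_surjective),
    Module.finrank_pi K, Nat.card_eq_fintype_card]

def invariantFunctions (σ : Equiv.Perm α) : Submodule K (α → K) where
  carrier := {f | ∀ x, f (σ x) = f x}
  add_mem' hf hg x := congrArg₂ (· + ·) (hf x) (hg x)
  zero_mem' _ := rfl
  smul_mem' c _ hf x := congrArg (c • ·) (hf x)

variable {K}

theorem mem_invariantFunctions {σ : Equiv.Perm α} {f : α → K} :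
    f ∈ invariantFunctions K σ ↔ ∀ x, f (σ x) = f x := Iff.rfl

theorem apply_pow_eq_of_mem_invariantFunctions {σ : Equiv.Perm α} {f : α → K}
    (hf : f ∈ invariantFunctions K σ) (m : ℕ) (x : α) : f ((σ ^ m) x) = f x := by
  induction m with
  | zero => rfl
  | succ m ih => rw [pow_succ', Equiv.Perm.mul_apply, hf, ih]

theorem apply_eq_of_mem_invariantFunctions [Finite α] {σ : Equiv.Perm α} {f : α → K}
    (hf : f ∈ invariantFunctions K σ) {x y : α} (h : σ.SameCycle x y) : f x = f y := by
  obtain ⟨m, rfl⟩ := h.exists_nat_pow_eq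
  exact (apply_pow_eq_of_mem_invariantFunctions hf m x).symm

variable (K)

theorem invariantFunctions_eq_classFunctions [Finite α] (σ : Equiv.Perm α) :
    invariantFunctions K σ = (Equiv.Perm.SameCycle.setoid σ).classFunctions K := by
  ext f
  exact ⟨fun hf _ _ => apply_eq_of_mem_invariantFunctions hf,
    fun hf x => (hf x (σ x) ⟨1, by simp⟩).symm⟩

theorem finrank_invariantFunctions [Finite α] (σ : Equiv.Perm α) :
    finrank K (invariantFunctions K σ) = StarGraph.cycleCount σ := by
  rw [invariantFunctions_eq_classFunctions, Setoid.finrank_classFunctions, StarGraph.cycleCount]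

theorem invariantFunctions_inf_eq_classFunctions (σ τ : Equiv.Perm α) :
    invariantFunctions K σ ⊓ invariantFunctions K τ =
      (Relation.EqvGen.setoid fun x y => y = σ x ∨ y = τ x).classFunctions K := by
  ext f
  refine ⟨fun ⟨hσ, hτ⟩ x y h => ?_, fun hf => ⟨fun x => ?_, fun x => ?_⟩⟩
  · induction h with
    | rel x y hxy => rcases hxy with rfl | rfl <;> simp [hσ x, hτ x]
    | refl => rfl
    | symm _ _ _ ih => exact ih.symm
    | trans _ _ _ _ _ ih₁ ih₂ => exact ih₁.trans ih₂
  · exact (hf x (σ x) (.rel _ _ (.inl rfl))).symm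
  · exact (hf x (τ x) (.rel _ _ (.inr rfl))).symm

end ClassFunctions

section Orthogonal

open Module

variable {K V V₂ : Type*} [Field K] [AddCommGroup V] [Module K V] [AddCommGroup V₂] [Module K V₂]

theorem Submodule.finrank_map_add_finrank_inf_ker [FiniteDimensional K V] (f : V →ₗ[K] V₂)
    (p : Submodule K V) :
    finrank K (p.map f) + finrank K (p ⊓ LinearMap.ker f : Submodule K V) = finrank K p := by
  rw [← LinearMap.range_domRestrict, ← Submodule.map_comap_subtype,
    ← (Submodule.equivSubtypeMap p _).finrank_eq, ← LinearMap.ker_domRestrict,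
    LinearMap.finrank_range_add_finrank_ker]

namespace LinearMap.BilinForm

variable (B : LinearMap.BilinForm K V)

theorem orthogonal_sup (W U : Submodule K V) :
    B.orthogonal (W ⊔ U) = B.orthogonal W ⊓ B.orthogonal U := by
  refine le_antisymm (le_inf (orthogonal_le le_sup_left) (orthogonal_le le_sup_right)) ?_
  rintro v ⟨hW, hU⟩ x hx
  obtain ⟨w, hw, u, hu, rfl⟩ := Submodule.mem_sup.1 hx
  simp only [map_add, LinearMap.add_apply, hW w hw, hU u hu, add_zero]

variable [FiniteDimensional K V] {B}

theorem two_mul_finrank_of_orthogonal_eq_self (hB : B.Nondegenerate) {W : Submodule K V}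
    (hW : B.orthogonal W = W) : 2 * finrank K W = finrank K V := by
  have := finrank_orthogonal hB W
  rw [hW] at this
  have := W.finrank_le
  omega

theorem finrank_inf_orthogonal_add_finrank (hB : B.Nondegenerate) {W : Submodule K V}
    (hW : B.orthogonal W = W) (U : Submodule K V) :
    finrank K (W ⊓ B.orthogonal U : Submodule K V) + finrank K U =
      finrank K W + finrank K (W ⊓ U : Submodule K V) := by
  have hsup := Submodule.finrank_sup_add_finrank_inf_eq W U
  have hle := (W ⊔ U).finrank_le
  have hdim := two_mul_finrank_of_orthogonal_eq_self hB hW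
  conv_lhs => rw [← hW, ← orthogonal_sup, finrank_orthogonal hB]
  omega

end LinearMap.BilinForm

end Orthogonal

section DotProduct

variable (K ι : Type*) [Field K] [Fintype ι]

abbrev dotBilinForm : LinearMap.BilinForm K (ι → K) := dotProductBilin K K

variable {K ι}

theorem dotBilinForm_nondegenerate [DecidableEq ι] :
    LinearMap.BilinForm.Nondegenerate (dotBilinForm K ι) :=
  ⟨fun _ hv => dotProduct_eq_zero_iff.1 hv,
    fun _ hv => dotProduct_eq_zero_iff.1 fun w => (dotProduct_comm _ _).trans (hv w)⟩

theorem mem_orthogonal_dotBilinForm {W : Submodule K (ι → K)} {v : ι → K} :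
    v ∈ (dotBilinForm K ι).orthogonal W ↔ ∀ w ∈ W, w ⬝ᵥ v = 0 :=
  LinearMap.BilinForm.mem_orthogonal_iff

end DotProduct

namespace StarGraph

open Module

variable (G : StarGraph)

theorem edgeInv_eq_iff {d e : G.D} : G.edgeInv d = e ↔ d = G.edgeInv e :=
  ⟨fun h => by rw [← h, G.edgeInv_invol], fun h => by rw [h, G.edgeInv_invol]⟩

abbrev vertexFunctions : Submodule (ZMod 2) (G.D → ZMod 2) := invariantFunctions (ZMod 2) G.rot

abbrev edgeFunctions : Submodule (ZMod 2) (G.D → ZMod 2) := invariantFunctions (ZMod 2) G.edgeInv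

abbrev faceFunctions (ρ : Equiv.Perm G.D) : Submodule (ZMod 2) (G.D → ZMod 2) :=
  invariantFunctions (ZMod 2) (ρ * G.edgeInv)

/-- An edge function is orthogonal to all vertex functions iff it has an even number of darts
at every vertex. -/
def cycleSpace : Submodule (ZMod 2) (G.D → ZMod 2) :=
  G.edgeFunctions ⊓ (dotBilinForm (ZMod 2) G.D).orthogonal G.vertexFunctions

def edgeSum : (G.D → ZMod 2) →ₗ[ZMod 2] G.D → ZMod 2 :=
  LinearMap.id + LinearMap.funLeft (ZMod 2) (ZMod 2) G.edgeInv

theorem edgeSum_apply (g : G.D → ZMod 2) (d : G.D) : G.edgeSum g d = g d + g (G.edgeInv d) :=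
  rfl

/-- On a set `g` of faces, `edgeSum` gives the set of edges with exactly one side in `g`. -/
def faceBoundaries (ρ : Equiv.Perm G.D) : Submodule (ZMod 2) (G.D → ZMod 2) :=
  (G.faceFunctions ρ).map G.edgeSum

theorem ker_edgeSum : LinearMap.ker G.edgeSum = G.edgeFunctions := by
  ext g
  simp only [LinearMap.mem_ker, funext_iff, edgeSum_apply, Pi.zero_apply]
  exact forall_congr' fun d => by rw [add_eq_zero_iff_eq_neg, CharTwo.neg_eq, eq_comm]

theorem edgeSum_mem_edgeFunctions (g : G.D → ZMod 2) : G.edgeSum g ∈ G.edgeFunctions := by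
  intro d
  rw [edgeSum_apply, edgeSum_apply, G.edgeInv_invol, add_comm]

def edgeVec (d : G.D) : G.D → ZMod 2 := Pi.single d 1 + Pi.single (G.edgeInv d) 1

theorem edgeVec_mem_edgeFunctions (d : G.D) : G.edgeVec d ∈ G.edgeFunctions := by
  intro x
  simp only [edgeVec, Pi.add_apply, Pi.single_apply, G.edgeInv_eq_iff, G.edgeInv_invol]
  exact add_comm _ _

theorem edgeVec_dotProduct (d : G.D) (v : G.D → ZMod 2) :
    G.edgeVec d ⬝ᵥ v = v d + v (G.edgeInv d) := by
  simp only [edgeVec, add_dotProduct, single_dotProduct, one_mul]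

theorem orthogonal_edgeFunctions :
    (dotBilinForm (ZMod 2) G.D).orthogonal G.edgeFunctions = G.edgeFunctions := by
  refine le_antisymm (fun v hv d => ?_) (fun v hv => ?_)
  · have := mem_orthogonal_dotBilinForm.1 hv _ (G.edgeVec_mem_edgeFunctions d)
    rwa [edgeVec_dotProduct, add_eq_zero_iff_eq_neg,
      CharTwo.neg_eq, eq_comm] at this
  · refine mem_orthogonal_dotBilinForm.2 fun u hu => ?_
    rw [dotProduct]
    -- the darts of each edge contribute the same term twice
    refine Finset.sum_involution (fun d _ => G.edgeInv d) (fun d _ => ?_)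
      (fun d _ _ => G.edgeInv_ne d) (fun _ _ => Finset.mem_univ _) (fun d _ => G.edgeInv_invol d)
    rw [hu d, hv d, CharTwo.add_self_eq_zero]

theorem finrank_edgeFunctions : finrank (ZMod 2) G.edgeFunctions = G.numEdges := by
  have := LinearMap.BilinForm.two_mul_finrank_of_orthogonal_eq_self
    dotBilinForm_nondegenerate G.orthogonal_edgeFunctions
  rw [Module.finrank_fintype_fun_eq_card] at this
  rw [numEdges]
  omega

theorem finrank_vertexFunctions_inf_edgeFunctions :
    finrank (ZMod 2) (G.vertexFunctions ⊓ G.edgeFunctions : Submodule (ZMod 2) _) =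
      G.numComponents := by
  rw [invariantFunctions_inf_eq_classFunctions, Setoid.finrank_classFunctions, numComponents]

theorem finrank_cycleSpace_add_numVertices :
    finrank (ZMod 2) G.cycleSpace + G.numVertices = G.numEdges + G.numComponents := by
  rw [cycleSpace, numVertices, ← finrank_invariantFunctions (ZMod 2), ← finrank_edgeFunctions,
    ← finrank_vertexFunctions_inf_edgeFunctions, inf_comm G.vertexFunctions]
  exact LinearMap.BilinForm.finrank_inf_orthogonal_add_finrank dotBilinForm_nondegenerate
    G.orthogonal_edgeFunctions G.vertexFunctions

variable {G} {ρ : Equiv.Perm G.D}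

theorem apply_edgeInv_of_mem_faceFunctions {g : G.D → ZMod 2} (hg : g ∈ G.faceFunctions ρ)
    (d : G.D) : g (G.edgeInv d) = g (ρ d) := by
  simpa [G.edgeInv_invol] using (hg (G.edgeInv d)).symm

namespace IsCompatibleRotation

theorem exists_forall_sameCycle_eq (hρ : G.IsCompatibleRotation ρ) (d : G.D) :
    ∃ τ, (τ = G.rot ∨ τ = G.rot⁻¹) ∧ ∀ e, τ.SameCycle d e → ρ e = τ e := by
  rcases hρ d with h | h
  · exact ⟨G.rot, .inl rfl, h⟩
  · exact ⟨G.rot⁻¹, .inr rfl, fun e he => h e (Equiv.Perm.sameCycle_inv.1 he)⟩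

theorem sameCycle_iff (hρ : G.IsCompatibleRotation ρ) {d e : G.D} :
    ρ.SameCycle d e ↔ G.SameVertex d e := by
  obtain ⟨τ, hτ, h⟩ := hρ.exists_forall_sameCycle_eq d
  rw [Equiv.Perm.sameCycle_iff_of_forall_sameCycle h]
  rcases hτ with rfl | rfl
  · rfl
  · exact Equiv.Perm.sameCycle_inv

theorem alternating_iff (hρ : G.IsCompatibleRotation ρ) {a₁ a₂ b₁ b₂ : G.D}
    (h₂ : G.SameVertex a₁ a₂) (h₃ : G.SameVertex a₁ b₁) (h₄ : G.SameVertex a₁ b₂)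
    (n₂ : a₂ ≠ a₁) (n₃ : b₁ ≠ a₁) (n₄ : b₂ ≠ a₁) :
    Alternating ρ a₁ a₂ b₁ b₂ ↔ Alternating G.rot a₁ a₂ b₁ b₂ := by
  obtain ⟨τ, hτ, h⟩ := hρ.exists_forall_sameCycle_eq a₁
  simp only [Alternating, stepsTo_eq_of_forall_sameCycle h]
  rcases hτ with rfl | rfl
  · rfl
  · exact alternating_inv_iff h₂ h₃ h₄ n₂ n₃ n₄

theorem invariantFunctions_eq (hρ : G.IsCompatibleRotation ρ) (K : Type*) [Field K] :
    invariantFunctions K ρ = invariantFunctions K G.rot := by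
  rw [invariantFunctions_eq_classFunctions, invariantFunctions_eq_classFunctions]
  congr 1
  ext d e
  exact hρ.sameCycle_iff

theorem faceFunctions_inf_edgeFunctions (hρ : G.IsCompatibleRotation ρ) :
    G.faceFunctions ρ ⊓ G.edgeFunctions = G.vertexFunctions ⊓ G.edgeFunctions := by
  rw [vertexFunctions, ← hρ.invariantFunctions_eq]
  ext f
  simp only [Submodule.mem_inf, mem_invariantFunctions, Equiv.Perm.mul_apply]
  refine and_congr_left fun hf => ⟨fun h d => ?_, fun h d => (h _).trans (hf d)⟩
  simpa [hf, G.edgeInv_invol] using h (G.edgeInv d)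

theorem faceBoundaries_le_cycleSpace (hρ : G.IsCompatibleRotation ρ) :
    G.faceBoundaries ρ ≤ G.cycleSpace := by
  rintro _ ⟨g, hg, rfl⟩
  refine ⟨G.edgeSum_mem_edgeFunctions g, mem_orthogonal_dotBilinForm.2 fun f hf => ?_⟩
  rw [vertexFunctions, ← hρ.invariantFunctions_eq] at hf
  have hshift : ∑ d, f d * g (ρ d) = ∑ d, f d * g d :=
    calc ∑ d, f d * g (ρ d) = ∑ d, f (ρ d) * g (ρ d) := by simp only [hf _]
      _ = ∑ d, f d * g d := Equiv.sum_comp ρ fun d => f d * g d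
  simp only [dotProduct, edgeSum_apply, mul_add, Finset.sum_add_distrib,
    apply_edgeInv_of_mem_faceFunctions hg, hshift,
    CharTwo.add_self_eq_zero]

theorem finrank_faceBoundaries_add_numComponents (hρ : G.IsCompatibleRotation ρ) :
    finrank (ZMod 2) (G.faceBoundaries ρ) + G.numComponents = G.numFaces ρ := by
  rw [← finrank_vertexFunctions_inf_edgeFunctions, ← hρ.faceFunctions_inf_edgeFunctions,
    ← ker_edgeSum, numFaces, ← finrank_invariantFunctions (ZMod 2)]
  exact Submodule.finrank_map_add_finrank_inf_ker _ _

end IsCompatibleRotation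

/-- Euler's formula makes the cycle space and the face boundaries equally large. -/
theorem IsPlanarStarEmbedding.cycleSpace_eq (hρ : G.IsPlanarStarEmbedding ρ) :
    G.cycleSpace = G.faceBoundaries ρ := by
  obtain ⟨hc, hEuler⟩ := hρ
  refine (Submodule.eq_of_le_of_finrank_eq hc.faceBoundaries_le_cycleSpace ?_).symm
  have := hc.finrank_faceBoundaries_add_numComponents
  have := G.finrank_cycleSpace_add_numVertices
  omega

end StarGraph

theorem ite_xor_eq_add (p q : Prop) [Decidable p] [Decidable q] :
    (if Xor p q then 1 else 0 : ZMod 2) = (if p then 1 else 0) + (if q then 1 else 0) := by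
  by_cases hp : p <;> by_cases hq : q <;> simp [hp, hq, CharTwo.add_self_eq_zero]

namespace ClosedTrail

variable {G : StarGraph} {ρ : Equiv.Perm G.D}

instance (A : ClosedTrail G) : NeZero A.len := ⟨A.len_pos.ne'⟩

section

variable (A : ClosedTrail G)

def inDart (i : ZMod A.len) : G.D := G.edgeInv (A.dart (i - 1))

theorem sameVertex_inDart (i : ZMod A.len) : G.SameVertex (A.inDart i) (A.dart i) := by
  simpa [inDart] using A.next_sameVertex (i - 1)

theorem inDart_ne (i : ZMod A.len) : A.inDart i ≠ A.dart i := by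
  intro h
  have := A.edges_injective (i - 1) i (Or.inr (G.edgeInv_eq_iff.1 h))
  rw [inDart, this] at h
  exact G.edgeInv_ne _ h

def edgeVector : G.D → ZMod 2 := ∑ i, G.edgeVec (A.dart i)

theorem edgeVector_mem_cycleSpace : A.edgeVector ∈ G.cycleSpace := by
  refine ⟨Submodule.sum_mem _ fun i _ => G.edgeVec_mem_edgeFunctions _,
    mem_orthogonal_dotBilinForm.2 fun f hf => ?_⟩
  have hnext (i : ZMod A.len) : f (G.edgeInv (A.dart i)) = f (A.dart (i + 1)) :=
    apply_eq_of_mem_invariantFunctions hf (A.next_sameVertex i)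
  rw [dotProduct_comm, edgeVector, sum_dotProduct]
  simp only [G.edgeVec_dotProduct, hnext, Finset.sum_add_distrib]
  rw [Fintype.sum_equiv (Equiv.addRight 1) (fun i => f (A.dart (i + 1))) (fun i => f (A.dart i))
    fun _ => rfl, CharTwo.add_self_eq_zero]

theorem sum_edgeVector (s : Finset G.D) : ∑ x ∈ s, A.edgeVector x =
    ∑ i, ((if A.inDart i ∈ s then 1 else 0) + (if A.dart i ∈ s then 1 else 0)) := by
  simp only [edgeVector, Finset.sum_apply, StarGraph.edgeVec, Pi.add_apply]
  rw [Finset.sum_comm]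
  simp only [Finset.sum_add_distrib, Finset.sum_pi_single']
  rw [add_comm, Fintype.sum_equiv (Equiv.subRight 1) (fun i => if A.inDart i ∈ s then 1 else 0)
    (fun i => if G.edgeInv (A.dart i) ∈ s then 1 else 0) fun _ => rfl]

end

variable {A B : ClosedTrail G}

theorem isCrossing_iff {i : ZMod A.len} {j : ZMod B.len} :
    A.IsCrossing B (i, j) ↔ G.SameVertex (A.dart i) (B.dart j) ∧
      Alternating G.rot (A.inDart i) (A.dart i) (B.inDart j) (B.dart j) :=
  Iff.rfl

theorem isCrossing_iff_xor (hAB : A.EdgeDisjoint B) (hρ : G.IsCompatibleRotation ρ)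
    (i : ZMod A.len) (j : ZMod B.len) :
    A.IsCrossing B (i, j) ↔ Xor (A.inDart i ∈ arc ρ (B.inDart j) (B.dart j))
      (A.dart i ∈ arc ρ (B.inDart j) (B.dart j)) := by
  have hA := A.sameVertex_inDart i
  have hB := B.sameVertex_inDart j
  simp only [isCrossing_iff, mem_arc, hρ.sameCycle_iff]
  by_cases hv : G.SameVertex (A.dart i) (B.dart j)
  · have n₁ : A.inDart i ≠ B.inDart j := fun h => (hAB (i - 1) (j - 1)).1 (G.edgeInv.injective h)
    have n₂ : A.inDart i ≠ B.dart j := fun h => (hAB (i - 1) j).2 (G.edgeInv_eq_iff.1 h)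
    have n₃ : A.dart i ≠ B.inDart j := (hAB i (j - 1)).2
    have n₄ : A.dart i ≠ B.dart j := (hAB i j).1
    have h₁ : G.SameVertex (B.inDart j) (A.inDart i) := hB.trans (hA.trans hv).symm
    have h₂ : G.SameVertex (B.inDart j) (A.dart i) := hB.trans hv.symm
    rw [← hρ.alternating_iff hA h₁.symm (hA.trans hv) (A.inDart_ne i).symm n₁.symm n₂.symm,
      alternating_iff_xor (hρ.sameCycle_iff.2 h₁) (hρ.sameCycle_iff.2 h₂) (hρ.sameCycle_iff.2 hB)
        n₁ n₃ n₄ (B.inDart_ne j)]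
    simp only [hv, h₁, h₂, true_and]
  · have h₁ : ¬ G.SameVertex (B.inDart j) (A.inDart i) := fun h =>
      hv ((hB.symm.trans h).trans hA).symm
    have h₂ : ¬ G.SameVertex (B.inDart j) (A.dart i) := fun h => hv (hB.symm.trans h).symm
    simp [hv, h₁, h₂]

theorem sum_isCrossing_eq_sum_arc (hAB : A.EdgeDisjoint B) (hρ : G.IsCompatibleRotation ρ)
    (j : ZMod B.len) [DecidablePred fun i => A.IsCrossing B (i, j)] :
    ∑ i, (if A.IsCrossing B (i, j) then 1 else 0 : ZMod 2) =
      ∑ x ∈ arc ρ (B.inDart j) (B.dart j), A.edgeVector x := by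
  rw [sum_edgeVector]
  refine Finset.sum_congr rfl fun i _ => ?_
  rw [if_congr (isCrossing_iff_xor hAB hρ i j) rfl rfl, ite_xor_eq_add]

theorem sum_arc_edgeSum (hρ : G.IsCompatibleRotation ρ) {g : G.D → ZMod 2}
    (hg : g ∈ G.faceFunctions ρ) (j : ZMod B.len) :
    ∑ x ∈ arc ρ (B.inDart j) (B.dart j), G.edgeSum g x = g (B.dart (j - 1)) + g (B.dart j) := by
  have hsub (x : G.D) : G.edgeSum g x = g (ρ x) - g x := by
    rw [G.edgeSum_apply, StarGraph.apply_edgeInv_of_mem_faceFunctions hg, CharTwo.sub_eq_add,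
      add_comm]
  simp only [hsub]
  rw [sum_arc_sub (hρ.sameCycle_iff.2 (B.sameVertex_inDart j)) (B.inDart_ne j).symm, inDart,
    ← StarGraph.apply_edgeInv_of_mem_faceFunctions hg, G.edgeInv_invol, CharTwo.sub_eq_add,
    add_comm]

end ClosedTrail

theorem StarGraph.IsPlanarStarEmbedding.even_card_crossings {G : StarGraph}
    {ρ : Equiv.Perm G.D} (hρ : G.IsPlanarStarEmbedding ρ) {A B : ClosedTrail G}
    (hAB : A.EdgeDisjoint B) : Even (Nat.card {p // A.IsCrossing B p}) := by
  classical
  obtain ⟨g, hg, hgA⟩ : A.edgeVector ∈ G.faceBoundaries ρ :=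
    hρ.cycleSpace_eq ▸ A.edgeVector_mem_cycleSpace
  rw [← ZMod.natCast_eq_zero_iff_even, Nat.card_eq_fintype_card, Fintype.card_subtype,
    ← Finset.sum_boole, Fintype.sum_prod_type_right]
  simp only [ClosedTrail.sum_isCrossing_eq_sum_arc hAB hρ.1, ← hgA,
    ClosedTrail.sum_arc_edgeSum hρ.1 hg]
  rw [Finset.sum_add_distrib, Fintype.sum_equiv (Equiv.subRight 1) (fun j => g (B.dart (j - 1)))
    (fun j => g (B.dart j)) fun _ => rfl, CharTwo.add_self_eq_zero]

/-- A *-graph containing a Vassiliev obstruct admits no *-embedding into the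
plane. -/
theorem not_starPlanar_of_vassilievObstruct (G : StarGraph)
    (h : HasVassilievObstruct G) : ¬ G.StarPlanar := by
  rintro ⟨ρ, hρ⟩
  obtain ⟨A, B, hAB, hone⟩ := h
  have := hρ.even_card_crossings hAB
  rw [hone] at this
  exact Nat.not_even_one this
end

section
/- Let G be a *-graph in which every vertex has degree 4 or 6, let G' be an expansion of G, and fix an X-embedding of G' into the sphere. Then for every expansion triangle T of G' and every vertex u of T, the two half-edges at u not belonging to T either both lie in the inside region of the simple closed curve formed by the embedded triangle T, or both lie in its outside region. -/
/-!
**Expansions.**  Let `G` be a *-graph all of whose vertices are 4- or 6-valent.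
An expansion `G'` of `G` is the 4-regular X-graph obtained by replacing every
6-valent vertex `v` of `G` by a triangle: if the *-structure at `v` is the
cyclic order `(A, B, C, D, E, F)`, then `v` is replaced by three new 4-valent
vertices `u₁, u₂, u₃` joined in a triangle, with `u₁` carrying the pendant
half-edges `A, B`, `u₂` carrying `C, D` and `u₃` carrying `E, F`, the
*-structure at `u₁` being the cyclic order `(edge u₃u₁, A, B, edge u₁u₂)`,
i.e. `A` is opposite the edge `u₁u₂` and `B` is opposite the edge `u₃u₁`
(or the mirror arrangement; both triangle arrangements are allowed, at each
6-valent vertex independently).  Since all vertices of `G'` are 4-valent,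
its X-structure is recorded by the opposition involution `rot²`.

In the data below, `leader` selects from each pair `{A, B}, {C, D}, {E, F}`
its first element (`leader_alt` says exactly that the chosen darts alternate
around each 6-valent vertex, so choosing a different starting dart of the
cyclic order realizes the other possible grouping into pairs), `ι` is the
inclusion of the darts of `G` into the darts of `G'`, and `L x`, `R x` are
the two triangle darts at the new vertex carrying the pair `(x, rot x)` of a
leader `x`, with cyclic order `(L x, ι x, ι (rot x), R x)` at that vertex. -/
structure ExpansionData (G G' : StarGraph) : Type where
  /-- the inclusion of old darts into the expanded graph -/
  ι : G.D → G'.D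
  /-- the chosen first elements of the pairs of consecutive darts at 6-valent
  vertices -/
  leader : G.D → Prop
  /-- `L x` is the triangle dart preceding `ι x` at the new vertex of a leader `x` -/
  L : G.D → G'.D
  /-- `R x` is the triangle dart following `ι (rot x)` at the new vertex of a
  leader `x` -/
  R : G.D → G'.D
  ι_inj : Function.Injective ι
  /-- old edges are preserved -/
  map_edgeInv : ∀ d, G'.edgeInv (ι d) = ι (G.edgeInv d)
  /-- the expansion is 4-regular, i.e. an X-graph -/
  regular4 : ∀ d', G'.degree d' = 4
  /-- 4-valent vertices of `G` are kept, with their *-structure: same vertex … -/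
  four_sameVertex : ∀ d, G.degree d = 4 → G'.SameVertex (ι d) (ι (G.rot d))
  /-- … and same opposition (which, at a 4-valent vertex, is equivalent to the
  *-structure) -/
  four_opp : ∀ d, G.degree d = 4 → (G'.rot ^ 2) (ι d) = ι ((G.rot ^ 2) d)
  /-- around a 6-valent vertex, the leaders are exactly every other dart -/
  leader_alt : ∀ d, G.degree d = 6 → (leader d ↔ ¬ leader (G.rot d))
  /-- the pair `(x, rot x)` of a leader `x` stays together at one new vertex … -/
  six_sameVertex : ∀ x, G.degree x = 6 → leader x → G'.SameVertex (ι x) (ι (G.rot x))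
  /-- … whose cyclic order is `(L x, ι x, ι (rot x), R x)`: `ι x` is opposite `R x` … -/
  six_oppR : ∀ x, G.degree x = 6 → leader x → (G'.rot ^ 2) (ι x) = R x
  /-- … and `ι (rot x)` is opposite `L x` -/
  six_oppL : ∀ x, G.degree x = 6 → leader x → (G'.rot ^ 2) (ι (G.rot x)) = L x
  /-- the triangle edges join consecutive new vertices: at each 6-valent vertex,
  in one of the two possible arrangements, `R x` is glued to the `L`-dart of the
  next (resp. of the previous) leader -/
  triangle : ∀ d, G.degree d = 6 →
      (∀ x, G.SameVertex d x → leader x →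
        G'.edgeInv (R x) = L ((G.rot ^ 2) x)) ∨
      (∀ x, G.SameVertex d x → leader x →
        G'.edgeInv (R x) = L ((G.rot ^ 4) x))
  /-- triangle darts are new -/
  new_not_old : ∀ x d, G.degree x = 6 → leader x → L x ≠ ι d ∧ R x ≠ ι d
  /-- every dart of `G'` is an old dart or a triangle dart -/
  cover : ∀ d', (∃ d, ι d = d') ∨
      ∃ x, G.degree x = 6 ∧ leader x ∧ (L x = d' ∨ R x = d')

/-- `G'` is an expansion of the *-graph `G`. -/
def IsExpansion (G G' : StarGraph) : Prop := Nonempty (ExpansionData G G')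

/-!
**Regions.**  Fix a rotation system `ρ` describing an embedding of a graph into
the sphere.  The faces of the embedding are the cycles of the face permutation
`ρ * edgeInv`.  Given a cycle `T` of the graph (recorded as the set of darts of
its edges, closed under `edgeInv`), the embedded cycle is a simple closed curve
and the complement of its image in the sphere splits into regions — the inside
and the outside of the curve, by the Jordan curve theorem.  A point of the
complement of the curve lies in the region obtained by gluing the faces of the
embedding along all edges not belonging to `T`; accordingly, two darts (i.e.
the interiors of their half-edges, and the faces incident to them) lie in the
same region iff they are related by the equivalence generated by "lying on the
same face" together with "being the two sides of an edge not in `T`". -/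

/-- The face permutation of the rotation system `ρ`. -/
def StarGraph.facePerm (G : StarGraph) (ρ : Equiv.Perm G.D) : Equiv.Perm G.D :=
  ρ * G.edgeInv

/-- The darts `a` and `b` lie in the same region of the complement of the
embedded cycle `T` in the sphere, for the embedding given by the rotation
system `ρ`. -/
def SameRegion (G : StarGraph) (ρ : Equiv.Perm G.D) (T : Set G.D) (a b : G.D) : Prop :=
  Relation.EqvGen
    (fun d e => (G.facePerm ρ).SameCycle d e ∨ (d ∉ T ∧ e = G.edgeInv d)) a b

/-- The set of darts of the expansion triangle created for the 6-valent vertex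
of `G` containing the dart `x`. -/
def ExpansionData.TriangleDarts {G G' : StarGraph} (E : ExpansionData G G')
    (x : G.D) : Set G'.D :=
  {d' | ∃ y, G.SameVertex x y ∧ E.leader y ∧ (d' = E.L y ∨ d' = E.R y)}

/-!
At the new vertex `u` of the leader `x` the four darts are, in cyclic order,
`L x, ι x, ι (rot x), R x`, so the two pendant darts are neighbours in the rotation
at `u`.  A compatible rotation system turns this cyclic order one way or the other,
so one pendant dart is the `ρ`-successor of the other.  Crossing the pendant edge
(which is not a triangle edge) and then following the face permutation therefore
joins them without ever crossing the triangle.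
-/

namespace Equiv.Perm

variable {α : Type*} {f : Equiv.Perm α} {a b : α}

theorem card_sameCycle_of_apply_eq_self (ha : f a = a) :
    Nat.card {y // f.SameCycle a y} = 1 := by
  have h_eq : ∀ y : {y // f.SameCycle a y}, y = ⟨a, .refl f a⟩ := by
    rintro ⟨y, k, rfl⟩
    exact Subtype.ext (zpow_apply_eq_self_of_apply_eq_self ha k)
  exact Nat.card_eq_one_iff_exists.mpr ⟨_, h_eq⟩

theorem card_support_cycleOf_eq_card_sameCycle [Fintype α] [DecidableEq α] (ha : f a ≠ a) :
    (f.cycleOf a).support.card = Nat.card {y // f.SameCycle a y} := by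
  rw [Nat.card_eq_fintype_card, Fintype.card_subtype]
  congr 1
  ext y
  simp only [Finset.mem_filter, Finset.mem_univ, true_and, mem_support_cycleOf_iff' ha]

theorem SameCycle.eq_or_eq_or_eq_or_apply_eq_of_card_eq_four [Fintype α] [DecidableEq α]
    (h : f.SameCycle a b) (h4 : Nat.card {y // f.SameCycle a y} = 4) :
    b = a ∨ b = f a ∨ b = (f ^ 2) a ∨ f b = a := by
  have ha : f a ≠ a := fun ha => by
    rw [card_sameCycle_of_apply_eq_self ha] at h4; exact absurd h4 (by decide)
  have hsupp : (f.cycleOf a).support.card = 4 :=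
    (card_support_cycleOf_eq_card_sameCycle ha).trans h4
  obtain ⟨i, hi, rfl⟩ := h.exists_pow_eq_of_mem_support (mem_support.mpr ha)
  rw [hsupp] at hi
  interval_cases i
  · exact .inl (by simp)
  · exact .inr (.inl (by simp))
  · exact .inr (.inr (.inl _root_.rfl))
  · have h_period : (f ^ 4) a = a := by
      simpa [hsupp] using (pow_mod_card_support_cycleOf_self_apply f 4 a).symm
    refine .inr (.inr (.inr ?_))
    rwa [← mul_apply, ← pow_succ']

end Equiv.Perm

namespace StarGraph

variable {G : StarGraph}

theorem SameVertex.degree_eq {d e : G.D} (h : G.SameVertex d e) : G.degree d = G.degree e :=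
  Nat.card_congr (Equiv.subtypeEquivRight fun _ => ⟨h.symm.trans, h.trans⟩)

theorem rot_apply_ne_self_of_degree_ne_one {d : G.D} (hd : G.degree d ≠ 1) : G.rot d ≠ d :=
  fun h => hd (Equiv.Perm.card_sameCycle_of_apply_eq_self h)

theorem IsCompatibleRotation.apply_eq_or_apply_eq {ρ : Equiv.Perm G.D}
    (hρ : G.IsCompatibleRotation ρ) {a b : G.D} (h : G.rot a = b ∨ G.rot b = a) :
    ρ a = b ∨ ρ b = a := by
  wlog hab : G.rot a = b generalizing a b
  · exact (this h.symm (h.resolve_left hab)).symm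
  have hb : G.SameVertex a b := ⟨1, by simpa using hab⟩
  rcases hρ a with hrot | hrot
  · exact .inl ((hrot a (.refl _ _)).trans hab)
  · exact .inr ((hrot b hb).trans (Equiv.Perm.inv_eq_iff_eq.mpr hab.symm))

end StarGraph

theorem sameRegion_of_apply_eq_or_apply_eq {G : StarGraph} {ρ : Equiv.Perm G.D}
    {T : Set G.D} {a b : G.D} (ha : a ∉ T) (hb : b ∉ T) (h : ρ a = b ∨ ρ b = a) :
    SameRegion G ρ T a b := by
  wlog hab : ρ a = b generalizing a b
  · exact .symm _ _ (this hb ha h.symm (h.resolve_left hab))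
  have h_face : (G.facePerm ρ) (G.edgeInv a) = b := by
    simp only [StarGraph.facePerm, Equiv.Perm.mul_apply, G.edgeInv_invol, hab]
  exact .trans _ (G.edgeInv a) _ (.rel _ _ (.inr ⟨ha, rfl⟩))
    (.rel _ _ (.inl ⟨1, by simpa using h_face⟩))

namespace ExpansionData

variable {G G' : StarGraph} (E : ExpansionData G G') {x : G.D}

theorem ι_notMem_triangleDarts (hx6 : G.degree x = 6) (d : G.D) :
    E.ι d ∉ E.TriangleDarts x := by
  rintro ⟨y, hxy, hy, hL | hR⟩
  · exact (E.new_not_old y d (hxy.degree_eq ▸ hx6) hy).1 hL.symm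
  · exact (E.new_not_old y d (hxy.degree_eq ▸ hx6) hy).2 hR.symm

theorem rot_ι_eq_or_rot_ι_eq (hx6 : G.degree x = 6) (hx : E.leader x) :
    G'.rot (E.ι x) = E.ι (G.rot x) ∨ G'.rot (E.ι (G.rot x)) = E.ι x := by
  rcases (E.six_sameVertex x hx6 hx).eq_or_eq_or_eq_or_apply_eq_of_card_eq_four (E.regular4 _)
    with h | h | h | h
  · exact absurd (E.ι_inj h) (G.rot_apply_ne_self_of_degree_ne_one (by omega))
  · exact .inl h.symm
  · rw [E.six_oppR x hx6 hx] at h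
    exact absurd h.symm (E.new_not_old x (G.rot x) hx6 hx).2
  · exact .inr h

end ExpansionData

theorem expansion_triangle_pendants_sameRegion_general (G G' : StarGraph)
    (E : ExpansionData G G')
    (ρ : Equiv.Perm G'.D) (hρ : G'.IsPlanarStarEmbedding ρ)
    (x : G.D) (hx6 : G.degree x = 6) (hx : E.leader x) :
    SameRegion G' ρ (E.TriangleDarts x) (E.ι x) (E.ι (G.rot x)) :=
  sameRegion_of_apply_eq_or_apply_eq (E.ι_notMem_triangleDarts hx6 _)
    (E.ι_notMem_triangleDarts hx6 _) (hρ.1.apply_eq_or_apply_eq (E.rot_ι_eq_or_rot_ι_eq hx6 hx))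

/-- Let `G` be a *-graph all of whose vertices have degree 4 or 6, let `G'` be
an expansion of `G`, and fix an X-embedding of `G'` into the sphere, i.e. a
compatible rotation system `ρ` of Euler characteristic 2 on each component.
Then for every expansion triangle `T` of `G'` — say the triangle created for
the 6-valent vertex containing a dart `x` of `G`, where `x` is a leader — and
every vertex `u` of `T`, the two half-edges at `u` not belonging to `T` (at the
vertex of the leader `x` these are `ι x` and `ι (rot x)`) both lie in the same
region of the complement of the embedded triangle, i.e. either both lie in its
inside region or both lie in its outside region. -/
theorem expansion_triangle_pendants_sameRegion (G G' : StarGraph)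
    (hdeg : ∀ d : G.D, G.degree d = 4 ∨ G.degree d = 6)
    (E : ExpansionData G G')
    (ρ : Equiv.Perm G'.D) (hρ : G'.IsPlanarStarEmbedding ρ)
    (x : G.D) (hx6 : G.degree x = 6) (hx : E.leader x) :
    SameRegion G' ρ (E.TriangleDarts x) (E.ι x) (E.ι (G.rot x)) :=
  expansion_triangle_pendants_sameRegion_general G G' E ρ hρ x hx6 hx
end
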